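/- Let m ≥ 2 be an integer and ω ∈ (0, m−1] irrational. Then the convergents ωₙ = pₙ/qₙ of the m-adic continued fraction expansion of ω converge to ω: limₙ→∞ pₙ/qₙ = ω. -/

import Mathlib

noncomputable def b1 (m : ℕ) (x : ℝ) : ℤ := ⌊Real.log x⁻¹ / Real.log m⌋

noncomputable def tau (m : ℕ) (x : ℝ) : ℝ :=
  (m : ℝ) ^ (Real.log x⁻¹ / Real.log m - (b1 m x : ℝ)) - 1

noncomputable def digit (m : ℕ) (ω : ℝ) (n : ℕ) : ℤ := b1 m ((tau m)^[n - 1] ω)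

/-!
Put `xₙ = τⁿ(ω)` and `aₙ = m ^ b₁(xₙ)`. One step of the algorithm is `aₙ xₙ (1 + xₙ₊₁) = 1`,
and unrolling it gives `ω = (pₙ₊₁ + t pₙ) / (qₙ₊₁ + t qₙ)` with `t = xₙ₊₁ aₙ > 0`. So `ω` lies
between two consecutive convergents, and its distance to `pₙ₊₁ / qₙ₊₁` is at most their gap. By
the determinant identity the gaps shrink by the factor `aₙ qₙ / qₙ₊₂ ≤ 1 / (1 + 1/m)`, because
`ω ≤ m - 1` and `τ < m - 1` force every digit to be at least `-1`, i.e. `aₙ ≥ 1/m`.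
-/

open Filter Topology

theorem abs_div_sub_le_of_mul_add_eq {P Q P' Q' t y : ℝ} (hQ : 0 < Q) (hQ' : 0 < Q')
    (ht : 0 < t) (h : y * (Q + t * Q') = P + t * P') : |P / Q - y| ≤ |P / Q - P' / Q'| := by
  have hD : 0 < Q + t * Q' := by positivity
  have hy : P / Q - y = t * Q' / (Q + t * Q') * (P / Q - P' / Q') := by
    rw [eq_div_of_mul_eq hD.ne' h]
    field_simp
    ring
  rw [hy, abs_mul, abs_of_pos (by positivity)]
  refine mul_le_of_le_one_left (abs_nonneg _) ?_
  rw [div_le_one hD]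
  linarith

structure IsContinuants (a p q : ℕ → ℝ) : Prop where
  p_zero : p 0 = 0
  q_zero : q 0 = 1
  p_one : p 1 = 1
  q_one : q 1 = a 0
  p_add_two : ∀ n, p (n + 2) = a (n + 1) * p (n + 1) + a n * p n
  q_add_two : ∀ n, q (n + 2) = a (n + 1) * q (n + 1) + a n * q n

namespace IsContinuants

variable {a p q : ℕ → ℝ}

theorem q_pos (h : IsContinuants a p q) (ha : ∀ n, 0 < a n) (n : ℕ) : 0 < q n := by
  induction n using Nat.twoStepInduction with
  | zero => simp [h.q_zero]
  | one => simpa [h.q_one] using ha 0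
  | more n ih₀ ih₁ =>
    rw [h.q_add_two]
    have := ha n; have := ha (n + 1)
    positivity

theorem mul_q_le_q_succ (h : IsContinuants a p q) (ha : ∀ n, 0 < a n) (n : ℕ) :
    a n * q n ≤ q (n + 1) := by
  cases n with
  | zero => simp [h.q_zero, h.q_one]
  | succ n =>
    rw [h.q_add_two]
    have := mul_pos (ha n) (h.q_pos ha n)
    linarith

theorem div_sub_div_succ (h : IsContinuants a p q) (ha : ∀ n, 0 < a n) (n : ℕ) :
    p (n + 2) / q (n + 2) - p (n + 1) / q (n + 1) =
      -(a n * q n / q (n + 2)) * (p (n + 1) / q (n + 1) - p n / q n) := by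
  have := h.q_pos ha n; have := h.q_pos ha (n + 1); have := h.q_pos ha (n + 2)
  field_simp
  rw [h.p_add_two, h.q_add_two]
  ring

theorem abs_div_sub_div_succ_le (h : IsContinuants a p q) {c : ℝ} (hc : 0 < c)
    (ha : ∀ n, c ≤ a n) (n : ℕ) :
    |p (n + 2) / q (n + 2) - p (n + 1) / q (n + 1)| ≤
      (1 + c)⁻¹ * |p (n + 1) / q (n + 1) - p n / q n| := by
  have ha₀ : ∀ n, 0 < a n := fun n => hc.trans_le (ha n)
  have hq := h.q_pos ha₀
  -- `q (n + 2) ≥ a (n + 1) * (a n * q n) + a n * q n ≥ (1 + c) * (a n * q n)`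
  have hq₂ : (1 + c) * (a n * q n) ≤ q (n + 2) := by
    rw [h.q_add_two]
    nlinarith [ha (n + 1), h.mul_q_le_q_succ ha₀ n, mul_pos (ha₀ n) (hq n), hq (n + 1)]
  have hratio : a n * q n / q (n + 2) ≤ (1 + c)⁻¹ := by
    rw [div_le_iff₀ (hq _), inv_mul_eq_div, le_div_iff₀ (by positivity)]
    linarith
  have hratio₀ : 0 < a n * q n / q (n + 2) := by
    have := ha₀ n; have := hq n; have := hq (n + 2)
    positivity
  rw [h.div_sub_div_succ ha₀, abs_mul, abs_neg, abs_of_pos hratio₀]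
  exact mul_le_mul_of_nonneg_right hratio (abs_nonneg _)

theorem tendsto_abs_div_sub_div (h : IsContinuants a p q) {c : ℝ} (hc : 0 < c)
    (ha : ∀ n, c ≤ a n) :
    Tendsto (fun n => |p (n + 1) / q (n + 1) - p n / q n|) atTop (𝓝 0) := by
  have hr : (1 + c)⁻¹ < 1 := inv_lt_one_of_one_lt₀ (by linarith)
  refine squeeze_zero (fun n => abs_nonneg _)
    (fun n => le_geom (u := fun n => |p (n + 1) / q (n + 1) - p n / q n|) (by positivity) n
      fun k _ => h.abs_div_sub_div_succ_le hc ha k) ?_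
  simpa using (tendsto_pow_atTop_nhds_zero_of_lt_one (by positivity) hr).mul_const
    |p 1 / q 1 - p 0 / q 0|

theorem x_zero_mul_eq {x : ℕ → ℝ} (h : IsContinuants a p q)
    (hx : ∀ n, a n * x n * (1 + x (n + 1)) = 1) (n : ℕ) :
    x 0 * (q (n + 1) + x (n + 1) * a n * q n) = p (n + 1) + x (n + 1) * a n * p n := by
  induction n with
  | zero =>
    rw [h.p_one, h.p_zero, h.q_one, h.q_zero]
    linear_combination hx 0
  | succ n ih =>
    rw [h.p_add_two, h.q_add_two]
    linear_combination (a (n + 1) * (1 + x (n + 2))) * ih +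
      (a n * p n - x 0 * a n * q n) * hx (n + 1)

theorem tendsto_div {x : ℕ → ℝ} (h : IsContinuants a p q) {c : ℝ} (hc : 0 < c)
    (ha : ∀ n, c ≤ a n) (hx₀ : ∀ n, 0 < x n) (hx : ∀ n, a n * x n * (1 + x (n + 1)) = 1) :
    Tendsto (fun n => p n / q n) atTop (𝓝 (x 0)) := by
  have ha₀ : ∀ n, 0 < a n := fun n => hc.trans_le (ha n)
  have hq := h.q_pos ha₀
  rw [← tendsto_add_atTop_iff_nat 1, tendsto_iff_norm_sub_tendsto_zero]
  refine squeeze_zero (fun n => norm_nonneg _) (fun n => ?_) (h.tendsto_abs_div_sub_div hc ha)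
  rw [Real.norm_eq_abs]
  exact abs_div_sub_le_of_mul_add_eq (hq _) (hq n) (mul_pos (hx₀ _) (ha₀ n))
    (h.x_zero_mul_eq hx n)

end IsContinuants

section MAdic

variable {m : ℕ} {x : ℝ}

theorem tau_eq (hm : 1 < m) (hx : 0 < x) : tau m x = ((m : ℝ) ^ b1 m x * x)⁻¹ - 1 := by
  have hm₁ : (1 : ℝ) < m := by exact_mod_cast hm
  rw [tau, Real.rpow_sub (by linarith), Real.rpow_intCast,
    show Real.log x⁻¹ / Real.log m = Real.logb m x⁻¹ from rfl,
    Real.rpow_logb (by linarith) hm₁.ne' (inv_pos.2 hx), mul_inv, div_eq_inv_mul]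

theorem zpow_b1_mul_mul_one_add_tau (hm : 1 < m) (hx : 0 < x) :
    (m : ℝ) ^ b1 m x * x * (1 + tau m x) = 1 := by
  have : (m : ℝ) ^ b1 m x * x ≠ 0 := by positivity
  rw [tau_eq hm hx, add_sub_cancel, mul_inv_cancel₀ this]

theorem irrational_tau (hm : 1 < m) (hx : Irrational x) (hx₀ : 0 < x) :
    Irrational (tau m x) := by
  have hm₀ : ((m : ℚ) ^ b1 m x) ≠ 0 := zpow_ne_zero _ (by exact_mod_cast (by omega : m ≠ 0))
  rw [tau_eq hm hx₀, ← Rat.cast_natCast, ← Rat.cast_zpow]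
  simpa using ((hx.ratCast_mul hm₀).inv).sub_intCast 1

theorem tau_nonneg (hm : 1 < m) (x : ℝ) : 0 ≤ tau m x := by
  have hm₁ : (1 : ℝ) < m := by exact_mod_cast hm
  rw [tau, sub_nonneg]
  exact Real.one_le_rpow hm₁.le (sub_nonneg.2 (Int.floor_le _))

theorem tau_lt (hm : 1 < m) (x : ℝ) : tau m x < m - 1 := by
  have hm₁ : (1 : ℝ) < m := by exact_mod_cast hm
  rw [tau, sub_lt_sub_iff_right]
  conv_rhs => rw [← Real.rpow_one (m : ℝ)]
  have := Int.lt_floor_add_one (Real.log x⁻¹ / Real.log m)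
  exact Real.rpow_lt_rpow_of_exponent_lt hm₁ (by rw [b1]; linarith)

theorem neg_one_le_b1 (hm : 1 < m) (hx₀ : 0 < x) (hx : x ≤ m) : -1 ≤ b1 m x := by
  have hm₁ : (1 : ℝ) < m := by exact_mod_cast hm
  rw [b1, Int.le_floor, le_div_iff₀ (Real.log_pos hm₁), Real.log_inv]
  push_cast
  linarith [Real.log_le_log hx₀ hx]

theorem irrational_and_pos_iterate_tau (hm : 1 < m) (hx : Irrational x) (hx₀ : 0 < x) (n : ℕ) :
    Irrational ((tau m)^[n] x) ∧ 0 < (tau m)^[n] x := by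
  induction n with
  | zero => exact ⟨hx, hx₀⟩
  | succ n ih =>
    have hirr := irrational_tau hm ih.1 ih.2
    rw [Function.iterate_succ_apply']
    exact ⟨hirr, (tau_nonneg hm _).lt_of_ne' hirr.ne_zero⟩

end MAdic

theorem convergents_tendsto (m : ℕ) (hm : 2 ≤ m) (ω : ℝ) (hω : Irrational ω) (hω0 : 0 < ω) (hω1 : ω ≤ (m : ℝ) - 1)
    (p q : ℕ → ℝ)
    (hp0 : p 0 = 0) (hq0 : q 0 = 1) (hp1 : p 1 = 1) (hq1 : q 1 = (m : ℝ) ^ (digit m ω 1))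
    (hp : ∀ n, 2 ≤ n → p n = (m : ℝ) ^ (digit m ω n) * p (n - 1) + (m : ℝ) ^ (digit m ω (n - 1)) * p (n - 2))
    (hq : ∀ n, 2 ≤ n → q n = (m : ℝ) ^ (digit m ω n) * q (n - 1) + (m : ℝ) ^ (digit m ω (n - 1)) * q (n - 2)) :
    Filter.Tendsto (fun n => p n / q n) Filter.atTop (nhds ω) := by
  have hm₁ : (1 : ℝ) < m := by exact_mod_cast hm
  set x : ℕ → ℝ := fun n => (tau m)^[n] ω
  have hx := irrational_and_pos_iterate_tau hm hω hω0
  -- digits are indexed from 1: `digit m ω (n + 1)` unfolds to `b1 m (x n)`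
  have hcont : IsContinuants (fun n => (m : ℝ) ^ b1 m (x n)) p q :=
    ⟨hp0, hq0, hp1, hq1, fun n => hp (n + 2) le_add_self, fun n => hq (n + 2) le_add_self⟩
  have hx_le : ∀ n, x n ≤ m
    | 0 => hω1.trans (by linarith)
    | n + 1 => by
      simp only [x, Function.iterate_succ_apply']
      linarith [tau_lt hm ((tau m)^[n] ω)]
  refine hcont.tendsto_div (c := (m : ℝ)⁻¹) (by positivity) (fun n => ?_) (fun n => (hx n).2)
    (fun n => ?_)
  · simpa [zpow_neg_one] using zpow_le_zpow_right₀ hm₁.le (neg_one_le_b1 hm (hx n).2 (hx_le n))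
  · simp only [x, Function.iterate_succ_apply']
    exact zpow_b1_mul_mul_one_add_tau hm (hx n).2
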